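/- arXiv:1810.10295 — 8 statements merged into one kernel-verified Lean document; each statement's English description precedes it below -/
import Mathlib

section
/- Let G be an abelian group and let V be a two-sided invariant and (-I)-invariant linear space of complex-valued functions on G. Let f, g, h : G → ℂ be functions such that for every y ∈ G the functions x ↦ f(x−y) − f(x)g(y) − g(x)f(y) − h(x)h(y) and x ↦ f(x−y) − f(y−x) belong to V. Then for every y ∈ G both the function x ↦ f^e(x)g^o(y) + g^e(x)f^o(y) + h^e(x)h^o(y) and the function x ↦ f^e(y)g^o(x) + g^e(y)f^o(x) + h^e(y)h^o(x) belong to V. -/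
/-!
Put `Φ(x, y) = f(x)g(y) + g(x)f(y) + h(x)h(y)`. Modulo `V`, the function `x ↦ Φ(x, y)` agrees
with `x ↦ f(x - y)` for every `y`, and since `V` is `(-I)`-invariant, so do their reflections in
`x`; hence every parity component of `Φ` (even or odd in each variable separately) agrees
modulo `V` with the corresponding component of `f(x - y)`. The two functions of the theorem are
the components of `Φ` of mixed parity, and for mixed parity the component of `f(x - y)` is a
combination of `x ↦ f(x - y) - f(y - x)` and `x ↦ f(x + y) - f(-y - x)`, which lie in `V`.
-/

lemma AddSubgroup.units_int_smul_mem {A : Type*} [AddCommGroup A] (V : AddSubgroup A) {a : A}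
    (ha : a ∈ V) (s : ℤˣ) : s • a ∈ V := by
  rw [Units.smul_def]
  exact V.zsmul_mem ha _

section ParitySum

variable {G M : Type*} [AddCommGroup G] [AddCommGroup M]

/-- Four times the component of `Φ` of parity `s` in the first and `t` in the second variable
(`1` even, `-1` odd). -/
def paritySum (s t : ℤˣ) (Φ : G → G → M) (x y : G) : M :=
  Φ x y + s • Φ (-x) y + t • Φ x (-y) + (s * t) • Φ (-x) (-y)

variable (V : AddSubgroup (G → M)) {Φ Ψ : G → G → M}

lemma paritySum_sub_paritySum_mem (hV : ∀ u ∈ V, (fun x => u (-x)) ∈ V)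
    (hΦΨ : ∀ y, (fun x => Φ x y - Ψ x y) ∈ V) (s t : ℤˣ) (y : G) :
    (fun x => paritySum s t Φ x y - paritySum s t Ψ x y) ∈ V := by
  have hsplit : (fun x => paritySum s t Φ x y - paritySum s t Ψ x y) =
      (fun x => Φ x y - Ψ x y) + s • (fun x => Φ (-x) y - Ψ (-x) y)
        + t • (fun x => Φ x (-y) - Ψ x (-y)) + (s * t) • (fun x => Φ (-x) (-y) - Ψ (-x) (-y)) := by
    funext x
    simp only [paritySum, Pi.add_apply, Pi.smul_apply, smul_sub]
    abel
  rw [hsplit]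
  refine V.add_mem (V.add_mem (V.add_mem (hΦΨ y) ?_) ?_) ?_
  · exact V.units_int_smul_mem (hV _ (hΦΨ y)) s
  · exact V.units_int_smul_mem (hΦΨ (-y)) t
  · exact V.units_int_smul_mem (hV _ (hΦΨ (-y))) (s * t)

lemma paritySum_mem_of_sub_neg_neg_mem (hΨ : ∀ y, (fun x => Ψ x y - Ψ (-x) (-y)) ∈ V)
    {s t : ℤˣ} (hst : s * t = -1) (y : G) : (fun x => paritySum s t Ψ x y) ∈ V := by
  have ht : t = -s := by
    rw [← mul_right_inj s, hst, mul_neg, Int.units_mul_self]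
  have hsplit : (fun x => paritySum s t Ψ x y) =
      (fun x => Ψ x y - Ψ (-x) (-y)) - s • (fun x => Ψ x (-y) - Ψ (-x) (-(-y))) := by
    funext x
    rw [paritySum, hst, ht]
    simp only [neg_neg, Pi.sub_apply, Pi.smul_apply, smul_sub, Units.neg_smul, one_smul]
    abel
  rw [hsplit]
  exact V.sub_mem (hΨ y) (V.units_int_smul_mem (hΨ (-y)) s)

lemma paritySum_mem (hV : ∀ u ∈ V, (fun x => u (-x)) ∈ V)
    (hΦΨ : ∀ y, (fun x => Φ x y - Ψ x y) ∈ V) (hΨ : ∀ y, (fun x => Ψ x y - Ψ (-x) (-y)) ∈ V)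
    {s t : ℤˣ} (hst : s * t = -1) (y : G) : (fun x => paritySum s t Φ x y) ∈ V := by
  convert V.add_mem (paritySum_sub_paritySum_mem V hV hΦΨ s t y)
    (paritySum_mem_of_sub_neg_neg_mem V hΨ hst y) using 1
  funext x
  exact (sub_add_cancel _ _).symm

end ParitySum

theorem stmt_1_general {G : Type*} [AddCommGroup G]
    (V : Submodule ℂ (G → ℂ))
    (hVneg : ∀ f : G → ℂ, f ∈ V → (fun x => f (-x)) ∈ V)
    (f g h : G → ℂ)
    (h1 : ∀ y : G, (fun x => f (x - y) - f x * g y - g x * f y - h x * h y) ∈ V)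
    (h2 : ∀ y : G, (fun x => f (x - y) - f (y - x)) ∈ V) :
    ∀ y : G,
      ((fun x => (f x + f (-x)) / 2 * ((g y - g (-y)) / 2)
          + (g x + g (-x)) / 2 * ((f y - f (-y)) / 2)
          + (h x + h (-x)) / 2 * ((h y - h (-y)) / 2)) ∈ V) ∧
      ((fun x => (f y + f (-y)) / 2 * ((g x - g (-x)) / 2)
          + (g y + g (-y)) / 2 * ((f x - f (-x)) / 2)
          + (h y + h (-y)) / 2 * ((h x - h (-x)) / 2)) ∈ V) := by
  set Φ : G → G → ℂ := fun x y => f x * g y + g x * f y + h x * h y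
  have hΦ : ∀ y, (fun x => Φ x y - f (x - y)) ∈ V := fun y => by
    convert V.neg_mem (h1 y) using 1
    funext x
    simp only [Φ, Pi.neg_apply]
    ring
  have hΨ : ∀ y, (fun x => f (x - y) - f (-x - -y)) ∈ V := by
    simpa only [neg_sub_neg] using h2
  have hmixed {s t : ℤˣ} (hst : s * t = -1) (y : G) :
      (fun x => (4 : ℂ)⁻¹ * paritySum s t Φ x y) ∈ V :=
    V.smul_mem (4 : ℂ)⁻¹ (paritySum_mem V.toAddSubgroup hVneg hΦ hΨ hst y)
  intro y
  constructor
  · convert hmixed (s := 1) (t := -1) (by simp) y using 2 with x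
    simp only [paritySum, Φ, one_smul, one_mul, Units.neg_smul]
    ring
  · convert hmixed (s := -1) (t := 1) (by simp) y using 2 with x
    simp only [paritySum, Φ, one_smul, mul_one, Units.neg_smul]
    ring

theorem stmt_1 {G : Type*} [AddCommGroup G]
    (V : Submodule ℂ (G → ℂ))
    (hVtrans : ∀ f : G → ℂ, f ∈ V → ∀ y : G, (fun x => f (x + y)) ∈ V)
    (hVneg : ∀ f : G → ℂ, f ∈ V → (fun x => f (-x)) ∈ V)
    (f g h : G → ℂ)
    (h1 : ∀ y : G, (fun x => f (x - y) - f x * g y - g x * f y - h x * h y) ∈ V)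
    (h2 : ∀ y : G, (fun x => f (x - y) - f (y - x)) ∈ V) :
    ∀ y : G,
      ((fun x => (f x + f (-x)) / 2 * ((g y - g (-y)) / 2)
          + (g x + g (-x)) / 2 * ((f y - f (-y)) / 2)
          + (h x + h (-x)) / 2 * ((h y - h (-y)) / 2)) ∈ V) ∧
      ((fun x => (f y + f (-y)) / 2 * ((g x - g (-x)) / 2)
          + (g y + g (-y)) / 2 * ((f x - f (-x)) / 2)
          + (h y + h (-y)) / 2 * ((h x - h (-x)) / 2)) ∈ V) :=
  stmt_1_general V hVneg f g h h1 h2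
end

section
/- Let G be an abelian group and let V be a two-sided invariant and (-I)-invariant linear space of complex-valued functions on G. Let f, g, h : G → ℂ be functions such that for every y ∈ G the functions x ↦ f(x−y) − f(x)g(y) − g(x)f(y) − h(x)h(y) and x ↦ f(x−y) − f(y−x) belong to V. Then for every y ∈ G the function x ↦ g^o(x)f^e(y) + h^o(x)h^e(y) belongs to V. -/
/-!
Write `D_y(x) = f(x - y) - f(x)g(y) - g(x)f(y) - h(x)h(y)`. Since `V` is `(-I)`-invariant, the odd
parts `D_y(x) - D_y(-x)` and `D_{-y}(x) - D_{-y}(-x)` lie in `V`. Their sum is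
`[f(x - y) - f(y - x)] + [f(x + y) - f(-y - x)] - 2f^o(x)·2g^e(y) - 4(g^o(x)f^e(y) + h^o(x)h^e(y))`,
and the first three terms lie in `V` by the hypothesis on `f(x - y) - f(y - x)` (at `y`, `-y` and `0`).
-/

section

variable {G : Type*} [AddCommGroup G]

def additionDefect (f g h : G → ℂ) (y : G) : G → ℂ :=
  fun x => f (x - y) - f x * g y - g x * f y - h x * h y

lemma four_mul_oddPart_mul_evenPart_eq (f g h : G → ℂ) (x y : G) :
    4 * ((g x - g (-x)) / 2 * ((f y + f (-y)) / 2) + (h x - h (-x)) / 2 * ((h y + h (-y)) / 2))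
      = (f (x - y) - f (y - x)) + (f (x + y) - f (-y - x)) - (g y + g (-y)) * (f x - f (-x))
        - (additionDefect f g h y x - additionDefect f g h y (-x))
        - (additionDefect f g h (-y) x - additionDefect f g h (-y) (-x)) := by
  have hneg : -x - y = -y - x := by abel
  simp only [additionDefect, sub_neg_eq_add, neg_add_eq_sub, hneg]
  ring

end

theorem stmt_2_general {G : Type*} [AddCommGroup G]
    (V : Submodule ℂ (G → ℂ))
    (hVneg : ∀ f : G → ℂ, f ∈ V → (fun x => f (-x)) ∈ V)
    (f g h : G → ℂ)
    (h1 : ∀ y : G, (fun x => f (x - y) - f x * g y - g x * f y - h x * h y) ∈ V)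
    (h2 : ∀ y : G, (fun x => f (x - y) - f (y - x)) ∈ V) :
    ∀ y : G,
      (fun x => (g x - g (-x)) / 2 * ((f y + f (-y)) / 2)
        + (h x - h (-x)) / 2 * ((h y + h (-y)) / 2)) ∈ V := by
  intro y
  have hodd : ∀ {u : G → ℂ}, u ∈ V → (fun x => u x - u (-x)) ∈ V :=
    fun hu => V.sub_mem hu (hVneg _ hu)
  have hfodd : (fun x => f x - f (-x)) ∈ V := by simpa using h2 0
  have hplus : (fun x => f (x + y) - f (-y - x)) ∈ V := by simpa using h2 (-y)
  have hcomb : (fun x => (f (x - y) - f (y - x)) + (f (x + y) - f (-y - x))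
      - (g y + g (-y)) * (f x - f (-x))
      - (additionDefect f g h y x - additionDefect f g h y (-x))
      - (additionDefect f g h (-y) x - additionDefect f g h (-y) (-x))) ∈ V :=
    V.sub_mem (V.sub_mem (V.sub_mem (V.add_mem (h2 y) hplus) (V.smul_mem _ hfodd))
      (hodd (h1 y))) (hodd (h1 (-y)))
  convert V.smul_mem (4⁻¹ : ℂ) hcomb using 1
  funext x
  rw [Pi.smul_apply, smul_eq_mul, ← four_mul_oddPart_mul_evenPart_eq]
  ring

theorem stmt_2 {G : Type*} [AddCommGroup G]
    (V : Submodule ℂ (G → ℂ))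
    (hVtrans : ∀ f : G → ℂ, f ∈ V → ∀ y : G, (fun x => f (x + y)) ∈ V)
    (hVneg : ∀ f : G → ℂ, f ∈ V → (fun x => f (-x)) ∈ V)
    (f g h : G → ℂ)
    (h1 : ∀ y : G, (fun x => f (x - y) - f x * g y - g x * f y - h x * h y) ∈ V)
    (h2 : ∀ y : G, (fun x => f (x - y) - f (y - x)) ∈ V) :
    ∀ y : G,
      (fun x => (g x - g (-x)) / 2 * ((f y + f (-y)) / 2)
        + (h x - h (-x)) / 2 * ((h y + h (-y)) / 2)) ∈ V :=
  stmt_2_general V hVneg f g h h1 h2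
end

section
/- Let G be an abelian group and let V be a two-sided invariant and (-I)-invariant linear space of complex-valued functions on G. Let f, g, h : G → ℂ be functions such that f and h are linearly independent modulo V and the odd part h^o of h does not belong to V. Suppose that for every y ∈ G the functions x ↦ f(x−y) − f(x)g(y) − g(x)f(y) − h(x)h(y) and x ↦ f(x−y) − f(y−x) belong to V. Then there exist constants γ, η ∈ ℂ such that h^e = γ·f^e and g^o = −γ·h^o − η·f^o. -/
/-!
Reflecting the functional congruence and using `f(x - y) ≡ f(y - x)` gives, for every `y`,
`Ψ(x, y) ≡ Ψ(-x, -y)` modulo `V`, where `Ψ(x, y) = f(x)g(y) + g(x)f(y) + h(x)h(y)`.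
Symmetrizing in `y` splits this into two families of congruences: one in the odd parts of
`f, g, h` (as functions of `x`) with coefficients the even parts (evaluated at `y`), and one with
the roles of even and odd exchanged. Since `f^o ∈ V` while `h^o ∉ V` and `f^e ∉ V`, each family
forces a proportionality between its coefficient functions, and these are the two identities.
-/

theorem Submodule.exists_forall_eq_mul_of_smul_add_smul_mem {K M ι : Type*} [Field K]
    [AddCommGroup M] [Module K M] {V : Submodule K M} {u w : M} {a b : ι → K}
    (hw : w ∉ V) (h : ∀ i, a i • u + b i • w ∈ V) : ∃ γ, ∀ i, b i = γ * a i := by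
  by_cases ha : ∀ i, a i = 0
  · refine ⟨0, fun i => ?_⟩
    have hi : b i • w ∈ V := by simpa [ha i] using h i
    by_contra hb
    exact hw ((V.smul_mem_iff (by simpa using hb)).mp hi)
  · obtain ⟨i₀, hi₀⟩ := not_forall.mp ha
    refine ⟨b i₀ / a i₀, fun i => ?_⟩
    -- eliminating `u` between the members for `i₀` and `i` leaves a multiple of `w`
    have hmem : (a i₀ * b i - a i * b i₀) • w ∈ V := by
      convert V.sub_mem (V.smul_mem (a i₀) (h i)) (V.smul_mem (a i) (h i₀)) using 1
      module
    have hdet : a i₀ * b i - a i * b i₀ = 0 := by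
      by_contra hne
      exact hw ((V.smul_mem_iff hne).mp hmem)
    field_simp
    linear_combination hdet

section EvenOdd

variable {G : Type*} [AddCommGroup G]

noncomputable def evenPart (f : G → ℂ) : G → ℂ := fun x => (f x + f (-x)) / 2

noncomputable def oddPart (f : G → ℂ) : G → ℂ := fun x => (f x - f (-x)) / 2

theorem evenPart_add_oddPart (f : G → ℂ) : evenPart f + oddPart f = f := by
  funext x
  simp only [Pi.add_apply, evenPart, oddPart]
  ring

namespace SubtractionLaw

def rhs (f g h : G → ℂ) (x y : G) : ℂ := f x * g y + g x * f y + h x * h y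

variable {V : Submodule ℂ (G → ℂ)} {f g h : G → ℂ}

theorem rhs_sub_rhs_neg_mem (hVneg : ∀ φ : G → ℂ, φ ∈ V → (fun x => φ (-x)) ∈ V)
    (h1 : ∀ y : G, (fun x => f (x - y) - f x * g y - g x * f y - h x * h y) ∈ V)
    (h2 : ∀ y : G, (fun x => f (x - y) - f (y - x)) ∈ V) (y : G) :
    (fun x => rhs f g h x y - rhs f g h (-x) (-y)) ∈ V := by
  convert V.sub_mem (V.add_mem (hVneg _ (h1 (-y))) (h2 y)) (h1 y) using 1
  funext x
  simp only [rhs, Pi.add_apply, Pi.sub_apply, sub_neg_eq_add, neg_add_eq_sub]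
  ring

variable (hS : ∀ y, (fun x => rhs f g h x y - rhs f g h (-x) (-y)) ∈ V)
include hS

theorem evenPart_smul_oddPart_mem (y : G) :
    evenPart g y • oddPart f + evenPart f y • oddPart g + evenPart h y • oddPart h ∈ V := by
  convert V.smul_mem (1 / 4 : ℂ) (V.add_mem (hS y) (hS (-y))) using 1
  funext x
  simp only [rhs, evenPart, oddPart, Pi.add_apply, Pi.smul_apply, smul_eq_mul, neg_neg]
  ring

theorem oddPart_smul_evenPart_mem (y : G) :
    oddPart g y • evenPart f + oddPart f y • evenPart g + oddPart h y • evenPart h ∈ V := by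
  convert V.smul_mem (1 / 4 : ℂ) (V.sub_mem (hS y) (hS (-y))) using 1
  funext x
  simp only [rhs, evenPart, oddPart, Pi.add_apply, Pi.sub_apply, Pi.smul_apply, smul_eq_mul,
    neg_neg]
  ring

end SubtractionLaw

end EvenOdd

theorem stmt_4_general {G : Type*} [AddCommGroup G]
    (V : Submodule ℂ (G → ℂ))
    (hVneg : ∀ f : G → ℂ, f ∈ V → (fun x => f (-x)) ∈ V)
    (f g h : G → ℂ)
    (hindep : ∀ c d : ℂ, (fun x => c * f x + d * h x) ∈ V → c = 0 ∧ d = 0)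
    (hho : (fun x => (h x - h (-x)) / 2) ∉ V)
    (h1 : ∀ y : G, (fun x => f (x - y) - f x * g y - g x * f y - h x * h y) ∈ V)
    (h2 : ∀ y : G, (fun x => f (x - y) - f (y - x)) ∈ V) :
    ∃ γ η : ℂ,
      (∀ x : G, (h x + h (-x)) / 2 = γ * ((f x + f (-x)) / 2)) ∧
      (∀ x : G, (g x - g (-x)) / 2 = -γ * ((h x - h (-x)) / 2) - η * ((f x - f (-x)) / 2)) := by
  have hfo : oddPart f ∈ V := by
    convert V.smul_mem (1 / 2 : ℂ) (h2 0) using 1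
    funext x
    simp only [oddPart, Pi.smul_apply, smul_eq_mul, sub_zero, zero_sub]
    ring
  have hf : f ∉ V := fun hf => one_ne_zero (hindep 1 0 (by simpa using hf)).1
  have hfe : evenPart f ∉ V := fun hfe => hf (evenPart_add_oddPart f ▸ V.add_mem hfe hfo)
  have hS := SubtractionLaw.rhs_sub_rhs_neg_mem hVneg h1 h2
  obtain ⟨γ, hγ⟩ := V.exists_forall_eq_mul_of_smul_add_smul_mem (u := oddPart g)
    (w := oddPart h) (a := evenPart f) (b := evenPart h) hho fun y => by
      convert V.sub_mem (SubtractionLaw.evenPart_smul_oddPart_mem hS y)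
        (V.smul_mem (evenPart g y) hfo) using 1
      abel
  have hhe : evenPart h = γ • evenPart f := funext hγ
  obtain ⟨η, hη⟩ := V.exists_forall_eq_mul_of_smul_add_smul_mem (u := evenPart g)
    (b := oddPart g + γ • oddPart h) hfe fun y => by
      convert SubtractionLaw.oddPart_smul_evenPart_mem hS y using 1
      rw [hhe]
      simp only [Pi.add_apply, Pi.smul_apply, smul_eq_mul]
      module
  refine ⟨γ, -η, hγ, fun x => ?_⟩
  have hx := hη x
  simp only [Pi.add_apply, Pi.smul_apply, smul_eq_mul, oddPart] at hx
  linear_combination hx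

theorem stmt_4 {G : Type*} [AddCommGroup G]
    (V : Submodule ℂ (G → ℂ))
    (hVtrans : ∀ f : G → ℂ, f ∈ V → ∀ y : G, (fun x => f (x + y)) ∈ V)
    (hVneg : ∀ f : G → ℂ, f ∈ V → (fun x => f (-x)) ∈ V)
    (f g h : G → ℂ)
    (hindep : ∀ c d : ℂ, (fun x => c * f x + d * h x) ∈ V → c = 0 ∧ d = 0)
    (hho : (fun x => (h x - h (-x)) / 2) ∉ V)
    (h1 : ∀ y : G, (fun x => f (x - y) - f x * g y - g x * f y - h x * h y) ∈ V)
    (h2 : ∀ y : G, (fun x => f (x - y) - f (y - x)) ∈ V) :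
    ∃ γ η : ℂ,
      (∀ x : G, (h x + h (-x)) / 2 = γ * ((f x + f (-x)) / 2)) ∧
      (∀ x : G, (g x - g (-x)) / 2 = -γ * ((h x - h (-x)) / 2) - η * ((f x - f (-x)) / 2)) :=
  stmt_4_general V hVneg f g h hindep hho h1 h2
end

section
/- Let G be an abelian group and let m : G → ℂ be a nonzero multiplicative function such that m(−x) = m(x) for all x ∈ G. Let f, h : G → ℂ be functions with f(−x) = f(x) and h(−x) = −h(x) for all x ∈ G and with h not identically zero. Then f and h satisfy f(x+y) = f(x)m(y) + m(x)f(y) + h(x)h(y) for all x, y ∈ G if and only if there exists a nonzero additive function a : G → ℂ such that f = (1/2)a²·m and h = a·m. -/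
/-!
Dividing the equation by `m (x + y) = m x * m y`, which never vanishes, turns it into
`F (x + y) = F x + F y + a x * a y` for `F = f / m` and `a = h / m`. Putting `y = -x` gives
`F = a ^ 2 / 2`, after which the equation says `a (x + y) ^ 2 = (a x + a y) ^ 2`; the same identity
at `(x + y, -y)` and `(x + y, -x)` rules out the sign `a (x + y) = -(a x + a y)`.
-/

section

variable {G K : Type*} [AddCommGroup G] [Field K]

theorem eq_add_of_sq_eq_sq [NeZero (2 : K)] {s u v : K} (hs : s ^ 2 = (u + v) ^ 2)
    (hu : u ^ 2 = (s - v) ^ 2) (hv : v ^ 2 = (s - u) ^ 2) : s = u + v := by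
  have h2 : (2 : K) * (s * (s - (u + v))) = 0 := by linear_combination -hu - hv
  rcases mul_eq_zero.mp ((mul_eq_zero.mp h2).resolve_left two_ne_zero) with hs0 | hsuv
  · rw [hs0, sq, zero_mul, eq_comm, sq_eq_zero_iff] at hs
    rw [hs0, hs]
  · exact sub_eq_zero.mp hsuv

theorem map_add_of_sq_map_add [NeZero (2 : K)] {a : G → K} (hodd : ∀ x, a (-x) = -a x)
    (hsq : ∀ x y, a (x + y) ^ 2 = (a x + a y) ^ 2) (x y : G) : a (x + y) = a x + a y := by
  refine eq_add_of_sq_eq_sq (hsq x y) ?_ ?_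
  · simpa [hodd, sub_eq_add_neg] using hsq (x + y) (-y)
  · simpa [hodd, sub_eq_add_neg, add_comm x] using hsq (x + y) (-x)

theorem map_add_and_eq_sq_div_two [NeZero (2 : K)] {F a : G → K} (heven : ∀ x, F (-x) = F x)
    (hodd : ∀ x, a (-x) = -a x) (hFa : ∀ x y, F (x + y) = F x + F y + a x * a y) :
    (∀ x y, a (x + y) = a x + a y) ∧ ∀ x, F x = a x ^ 2 / 2 := by
  have ha0 : a 0 = 0 := by
    have h0 := hodd 0
    rw [neg_zero] at h0
    have h2 : (2 : K) * a 0 = 0 := by linear_combination h0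
    exact (mul_eq_zero.mp h2).resolve_left two_ne_zero
  have hF0 : F 0 = 0 := by simpa [ha0] using hFa 0 0
  have hF : ∀ x, F x = a x ^ 2 / 2 := fun x => by
    have hx := hFa x (-x)
    rw [add_neg_cancel, hF0, heven, hodd] at hx
    rw [eq_div_iff two_ne_zero]
    linear_combination -hx
  refine ⟨map_add_of_sq_map_add hodd fun x y => ?_, hF⟩
  have hxy := hFa x y
  rw [hF, hF, hF] at hxy
  field_simp at hxy
  linear_combination hxy

theorem apply_ne_zero_of_map_add_eq_mul {M₀ : Type*} [MulZeroClass M₀] {m : G → M₀}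
    (hm : ∀ x y, m (x + y) = m x * m y) (hm0 : m ≠ 0) (x : G) : m x ≠ 0 := by
  obtain ⟨x₀, hx₀⟩ := Function.ne_iff.mp hm0
  intro hx
  apply hx₀
  rw [← add_sub_cancel x x₀, hm, hx, zero_mul, Pi.zero_apply]

theorem div_map_add_eq_add_add_mul {m f h : G → K} (hm : ∀ x y, m (x + y) = m x * m y)
    (hm0 : ∀ x, m x ≠ 0) (hfh : ∀ x y, f (x + y) = f x * m y + m x * f y + h x * h y) (x y : G) :
    (f / m) (x + y) = (f / m) x + (f / m) y + (h / m) x * (h / m) y := by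
  simp only [Pi.div_apply, hfh, hm]
  field_simp [hm0 x, hm0 y]

end

theorem stmt_6 {G : Type*} [AddCommGroup G]
    (m : G → ℂ)
    (hm : ∀ x y : G, m (x + y) = m x * m y)
    (hm0 : m ≠ 0)
    (hmeven : ∀ x : G, m (-x) = m x)
    (f h : G → ℂ)
    (hfeven : ∀ x : G, f (-x) = f x)
    (hhodd : ∀ x : G, h (-x) = -h x)
    (hh0 : h ≠ 0) :
    (∀ x y : G, f (x + y) = f x * m y + m x * f y + h x * h y) ↔
      ∃ a : G → ℂ, (∀ x y : G, a (x + y) = a x + a y) ∧ a ≠ 0 ∧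
        (∀ x : G, f x = (1 / 2) * (a x) ^ 2 * m x) ∧
        (∀ x : G, h x = a x * m x) := by
  have hm_ne := apply_ne_zero_of_map_add_eq_mul hm hm0
  constructor
  · intro hfh
    obtain ⟨hadd, hF⟩ := map_add_and_eq_sq_div_two (F := f / m) (a := h / m)
      (fun x => by simp [hfeven, hmeven]) (fun x => by simp [hhodd, hmeven, neg_div])
      (div_map_add_eq_add_add_mul hm hm_ne hfh)
    refine ⟨h / m, hadd, fun ha => hh0 ?_, fun x => ?_, fun x => ?_⟩
    · funext x
      simpa [hm_ne x] using congrFun ha x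
    · have hx := hF x
      simp only [Pi.div_apply] at hx ⊢
      field_simp [hm_ne x] at hx ⊢
      linear_combination hx
    · simp [hm_ne x]
  · rintro ⟨a, hadd, -, hfa, hha⟩ x y
    rw [hfa, hfa, hfa, hha, hha, hm, hadd]
    ring
end

section
/- Let G be an abelian group, let m : G → ℂ be a multiplicative function such that either m(−x) = m(x) for all x ∈ G or m is bounded, let b, φ : G → ℂ be bounded functions, and let α ∈ ℂ∖{0}, λ ∈ ℂ be constants. Define f = αm − αb, g = ((1−αλ²)/2)m + ((1+αλ²)/2)b − λφ, and h = αλm − αλb + φ. Then the function (x,y) ↦ f(x−y) − f(x)g(y) − g(x)f(y) − h(x)h(y) is bounded on G×G. -/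
/-- A complex-valued function on `G` is bounded. -/
def Bdd {G : Type*} (F : G → ℂ) : Prop := ∃ C : ℝ, ∀ x : G, ‖F x‖ ≤ C

/-!
Write `D(x, y)` for the expression to be bounded. Expanding `f`, `g`, `h` gives
`D(x, y) = α (m(x - y) - m(x) m(y)) - α b(x - y) + α b(x) b(y) - φ(x) φ(y)`,
in which every term but the first is bounded because `b` and `φ` are. The first term vanishes
when `m` is even, since then `m(x - y) = m(x) m(-y) = m(x) m(y)`, and is bounded when `m` is.
-/

namespace Bdd

variable {X Y : Type*} {F F' : X → ℂ}

theorem congr (hF : Bdd F) (h : ∀ x, F x = F' x) : Bdd F' := by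
  simpa only [← funext h] using hF

theorem comp (hF : Bdd F) (k : Y → X) : Bdd (fun y => F (k y)) := by
  obtain ⟨C, hC⟩ := hF
  exact ⟨C, fun y => hC (k y)⟩

theorem add (hF : Bdd F) (hF' : Bdd F') : Bdd (fun x => F x + F' x) := by
  obtain ⟨C, hC⟩ := hF
  obtain ⟨C', hC'⟩ := hF'
  exact ⟨C + C', fun x => (norm_add_le _ _).trans (add_le_add (hC x) (hC' x))⟩

theorem sub (hF : Bdd F) (hF' : Bdd F') : Bdd (fun x => F x - F' x) := by
  obtain ⟨C, hC⟩ := hF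
  obtain ⟨C', hC'⟩ := hF'
  exact ⟨C + C', fun x => (norm_sub_le _ _).trans (add_le_add (hC x) (hC' x))⟩

theorem mul (hF : Bdd F) (hF' : Bdd F') : Bdd (fun x => F x * F' x) := by
  obtain ⟨C, hC⟩ := hF
  obtain ⟨C', hC'⟩ := hF'
  refine ⟨C * C', fun x => ?_⟩
  rw [norm_mul]
  exact mul_le_mul (hC x) (hC' x) (norm_nonneg _) ((norm_nonneg _).trans (hC x))

theorem const_mul (c : ℂ) (hF : Bdd F) : Bdd (fun x => c * F x) :=
  (show Bdd (fun _ : X => c) from ⟨‖c‖, fun _ => le_rfl⟩).mul hF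

theorem mul_prod {F' : Y → ℂ} (hF : Bdd F) (hF' : Bdd F') :
    Bdd (fun p : X × Y => F p.1 * F' p.2) :=
  (hF.comp Prod.fst).mul (hF'.comp Prod.snd)

end Bdd

section

variable {G : Type*} [AddCommGroup G] {m : G → ℂ}

theorem map_sub_eq_mul_of_even (hm : ∀ x y, m (x + y) = m x * m y) (heven : ∀ x, m (-x) = m x)
    (x y : G) : m (x - y) = m x * m y := by
  rw [sub_eq_add_neg, hm, heven]

theorem bdd_map_sub_sub_mul (hm : ∀ x y, m (x + y) = m x * m y)
    (hm' : (∀ x, m (-x) = m x) ∨ Bdd m) :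
    Bdd (fun p : G × G => m (p.1 - p.2) - m p.1 * m p.2) := by
  rcases hm' with heven | hbdd
  · exact ⟨0, fun p => by simp [map_sub_eq_mul_of_even hm heven]⟩
  · exact (hbdd.comp fun p : G × G => p.1 - p.2).sub (hbdd.mul_prod hbdd)

end

theorem stmt_9_general {G : Type*} [AddCommGroup G]
    (m b φ : G → ℂ) (α lam : ℂ)
    (hm : ∀ x y : G, m (x + y) = m x * m y)
    (hmsym : (∀ x : G, m (-x) = m x) ∨ Bdd m)
    (hb : Bdd b) (hφ : Bdd φ)
    (f g h : G → ℂ)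
    (hf : ∀ x : G, f x = α * m x - α * b x)
    (hg : ∀ x : G, g x = (1 - α * lam ^ 2) / 2 * m x + (1 + α * lam ^ 2) / 2 * b x - lam * φ x)
    (hh : ∀ x : G, h x = α * lam * m x - α * lam * b x + φ x) :
    ∃ C : ℝ, ∀ x y : G,
      ‖f (x - y) - f x * g y - g x * f y - h x * h y‖ ≤ C := by
  have hD : Bdd (fun p : G × G =>
      α * (m (p.1 - p.2) - m p.1 * m p.2) - α * b (p.1 - p.2) + α * (b p.1 * b p.2)
        - φ p.1 * φ p.2) :=
    ((((bdd_map_sub_sub_mul hm hmsym).const_mul α).sub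
      ((hb.comp fun p : G × G => p.1 - p.2).const_mul α)).add
      ((hb.mul_prod hb).const_mul α)).sub (hφ.mul_prod hφ)
  have hexpand : ∀ p : G × G,
      α * (m (p.1 - p.2) - m p.1 * m p.2) - α * b (p.1 - p.2) + α * (b p.1 * b p.2)
        - φ p.1 * φ p.2 = f (p.1 - p.2) - f p.1 * g p.2 - g p.1 * f p.2 - h p.1 * h p.2 := by
    intro p
    simp only [hf, hg, hh]
    ring
  obtain ⟨C, hC⟩ := hD.congr hexpand
  exact ⟨C, fun x y => hC (x, y)⟩

theorem stmt_9 {G : Type*} [AddCommGroup G]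
    (m b φ : G → ℂ) (α lam : ℂ)
    (hm : ∀ x y : G, m (x + y) = m x * m y)
    (hmsym : (∀ x : G, m (-x) = m x) ∨ Bdd m)
    (hb : Bdd b) (hφ : Bdd φ) (hα : α ≠ 0)
    (f g h : G → ℂ)
    (hf : ∀ x : G, f x = α * m x - α * b x)
    (hg : ∀ x : G, g x = (1 - α * lam ^ 2) / 2 * m x + (1 + α * lam ^ 2) / 2 * b x - lam * φ x)
    (hh : ∀ x : G, h x = α * lam * m x - α * lam * b x + φ x) :
    ∃ C : ℝ, ∀ x y : G,
      ‖f (x - y) - f x * g y - g x * f y - h x * h y‖ ≤ C :=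
  stmt_9_general m b φ α lam hm hmsym hb hφ f g h hf hg hh
end

section
/- Let G be an abelian group, let b : G → ℂ be a bounded function, let ρ ∈ ℂ, λ ∈ ℂ∖{0} be constants, and let f₀, g₀ : G → ℂ satisfy f₀(x+y) = f₀(x)f₀(y) − g₀(x)g₀(y) for all x, y ∈ G, with f₀(−x) = f₀(x) and g₀(−x) = g₀(x) for all x ∈ G. Define f = −λ²f₀ + λ²b, g = ((1+ρ²)/2)f₀ + ρg₀ + ((1−ρ²)/2)b, and h = λρf₀ + λg₀ − λρb. Then the function (x,y) ↦ f(x−y) − f(x)g(y) − g(x)f(y) − h(x)h(y) is bounded on G×G. -/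
theorem map_sub_of_map_add_of_even {G R : Type*} [AddGroup G] [CommRing R] {f₀ g₀ : G → R}
    (h₀ : ∀ x y, f₀ (x + y) = f₀ x * f₀ y - g₀ x * g₀ y)
    (hf₀ : ∀ x, f₀ (-x) = f₀ x) (hg₀ : ∀ x, g₀ (-x) = g₀ x) (x y : G) :
    f₀ (x - y) = f₀ x * f₀ y - g₀ x * g₀ y := by
  rw [sub_eq_add_neg, h₀, hf₀, hg₀]

theorem defect_eq_of_map_sub {G K : Type*} [Sub G] [Field K] [CharZero K]
    {b f₀ g₀ f g h : G → K} {ρ lam : K}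
    (hsub : ∀ x y, f₀ (x - y) = f₀ x * f₀ y - g₀ x * g₀ y)
    (hf : ∀ x, f x = -lam ^ 2 * f₀ x + lam ^ 2 * b x)
    (hg : ∀ x, g x = (1 + ρ ^ 2) / 2 * f₀ x + ρ * g₀ x + (1 - ρ ^ 2) / 2 * b x)
    (hh : ∀ x, h x = lam * ρ * f₀ x + lam * g₀ x - lam * ρ * b x) (x y : G) :
    f (x - y) - f x * g y - g x * f y - h x * h y = lam ^ 2 * (b (x - y) - b x * b y) := by
  simp only [hf, hg, hh, hsub]
  ring

theorem Bdd.exists_norm_sub_mul_le {α : Type*} {b : α → ℂ} (hb : Bdd b) :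
    ∃ C : ℝ, ∀ u v w, ‖b u - b v * b w‖ ≤ C := by
  obtain ⟨C, hC⟩ := hb
  refine ⟨C + C * C, fun u v w => ?_⟩
  have hC₀ : 0 ≤ C := (norm_nonneg _).trans (hC u)
  calc ‖b u - b v * b w‖ ≤ ‖b u‖ + ‖b v‖ * ‖b w‖ := by
        simpa only [norm_mul] using norm_sub_le (b u) (b v * b w)
    _ ≤ C + C * C := add_le_add (hC u) (mul_le_mul (hC v) (hC w) (norm_nonneg _) hC₀)

theorem stmt_11_general {G : Type*} [AddCommGroup G]
    (b f₀ g₀ : G → ℂ) (ρ lam : ℂ)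
    (hb : Bdd b)
    (h₀ : ∀ x y : G, f₀ (x + y) = f₀ x * f₀ y - g₀ x * g₀ y)
    (hf₀ : ∀ x : G, f₀ (-x) = f₀ x) (hg₀ : ∀ x : G, g₀ (-x) = g₀ x)
    (f g h : G → ℂ)
    (hf : ∀ x : G, f x = -lam ^ 2 * f₀ x + lam ^ 2 * b x)
    (hg : ∀ x : G, g x = (1 + ρ ^ 2) / 2 * f₀ x + ρ * g₀ x + (1 - ρ ^ 2) / 2 * b x)
    (hh : ∀ x : G, h x = lam * ρ * f₀ x + lam * g₀ x - lam * ρ * b x) :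
    ∃ C : ℝ, ∀ x y : G,
      ‖f (x - y) - f x * g y - g x * f y - h x * h y‖ ≤ C := by
  obtain ⟨C, hC⟩ := hb.exists_norm_sub_mul_le
  refine ⟨‖lam ^ 2‖ * C, fun x y => ?_⟩
  rw [defect_eq_of_map_sub (map_sub_of_map_add_of_even h₀ hf₀ hg₀) hf hg hh, norm_mul]
  exact mul_le_mul_of_nonneg_left (hC _ _ _) (norm_nonneg _)

theorem stmt_11 {G : Type*} [AddCommGroup G]
    (b f₀ g₀ : G → ℂ) (ρ lam : ℂ)
    (hb : Bdd b) (hlam : lam ≠ 0)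
    (h₀ : ∀ x y : G, f₀ (x + y) = f₀ x * f₀ y - g₀ x * g₀ y)
    (hf₀ : ∀ x : G, f₀ (-x) = f₀ x) (hg₀ : ∀ x : G, g₀ (-x) = g₀ x)
    (f g h : G → ℂ)
    (hf : ∀ x : G, f x = -lam ^ 2 * f₀ x + lam ^ 2 * b x)
    (hg : ∀ x : G, g x = (1 + ρ ^ 2) / 2 * f₀ x + ρ * g₀ x + (1 - ρ ^ 2) / 2 * b x)
    (hh : ∀ x : G, h x = lam * ρ * f₀ x + lam * g₀ x - lam * ρ * b x) :
    ∃ C : ℝ, ∀ x y : G,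
      ‖f (x - y) - f x * g y - g x * f y - h x * h y‖ ≤ C :=
  stmt_11_general b f₀ g₀ ρ lam hb h₀ hf₀ hg₀ f g h hf hg hh
end

section
/- Let G be an abelian group and let f, g, h : G → ℂ be functions such that the function (x,y) ↦ f(x−y) − f(x)g(y) − g(x)f(y) − h(x)h(y) is bounded on G×G. Suppose h is unbounded and there exist constants (λ, μ) ∈ ℂ² with (λ, μ) ≠ (0,0) such that λf + μh is bounded (i.e., f and h are linearly dependent modulo B(G)). Then f is unbounded. -/
def boundedFunctions (G : Type*) : Submodule ℂ (G → ℂ) where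
  carrier := {F | Bdd F}
  zero_mem' := ⟨0, fun _ => by simp⟩
  add_mem' := by
    rintro F₁ F₂ ⟨C₁, hC₁⟩ ⟨C₂, hC₂⟩
    exact ⟨C₁ + C₂, fun x => (norm_add_le _ _).trans (add_le_add (hC₁ x) (hC₂ x))⟩
  smul_mem' := by
    rintro k F ⟨C, hC⟩
    refine ⟨‖k‖ * C, fun x => ?_⟩
    rw [Pi.smul_apply, smul_eq_mul, norm_mul]
    exact mul_le_mul_of_nonneg_left (hC x) (norm_nonneg k)

section

variable {G : Type*}

theorem Bdd.comp_sub_right [Sub G] {F : G → ℂ} (hF : Bdd F) (y : G) :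
    Bdd fun x => F (x - y) := by
  obtain ⟨C, hC⟩ := hF
  exact ⟨C, fun x => hC (x - y)⟩

theorem bdd_of_forall_smul_add_smul_mem {a b c : G → ℂ} (ha : a ∈ boundedFunctions G)
    (hslice : ∀ y, a y • c + b y • b ∈ boundedFunctions G) : b ∈ boundedFunctions G := by
  by_cases hprop : ∀ y₁ y₂, a y₂ * b y₁ = a y₁ * b y₂
  · by_cases ha0 : ∀ y, a y = 0
    · by_cases hb0 : ∀ y, b y = 0
      · simp [show b = 0 from funext hb0]
      push Not at hb0
      obtain ⟨y₀, hy₀⟩ := hb0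
      have := hslice y₀
      rwa [ha0 y₀, zero_smul, zero_add, Submodule.smul_mem_iff _ hy₀] at this
    push Not at ha0
    obtain ⟨y₀, hy₀⟩ := ha0
    have hb : b = (b y₀ / a y₀) • a := by
      ext x
      simp only [Pi.smul_apply, smul_eq_mul]
      field_simp
      linear_combination -hprop y₀ x
    rw [hb]
    exact Submodule.smul_mem _ _ ha
  · push Not at hprop
    obtain ⟨y₁, y₂, hne⟩ := hprop
    have hcomb : (a y₂ * b y₁ - a y₁ * b y₂) • b
        = a y₂ • (a y₁ • c + b y₁ • b) - a y₁ • (a y₂ • c + b y₂ • b) := by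
      ext x
      simp only [Pi.smul_apply, Pi.add_apply, Pi.sub_apply, smul_eq_mul]
      ring
    have hmem := Submodule.sub_mem _ (Submodule.smul_mem _ (a y₂) (hslice y₁))
      (Submodule.smul_mem _ (a y₁) (hslice y₂))
    rwa [← hcomb, Submodule.smul_mem_iff _ (sub_ne_zero.mpr hne)] at hmem

theorem smul_add_smul_mem_boundedFunctions [AddCommGroup G] {f g h : G → ℂ}
    (hbound : ∃ C : ℝ, ∀ x y : G, ‖f (x - y) - f x * g y - g x * f y - h x * h y‖ ≤ C)
    (hf : Bdd f) (y : G) : f y • g + h y • h ∈ boundedFunctions G := by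
  obtain ⟨C, hC⟩ := hbound
  have hdefect : Bdd fun x => f (x - y) - f x * g y - g x * f y - h x * h y :=
    ⟨C, fun x => hC x y⟩
  have hslice : f y • g + h y • h = (fun x => f (x - y)) - g y • f
      - fun x => f (x - y) - f x * g y - g x * f y - h x * h y := by
    ext x
    simp only [Pi.smul_apply, Pi.add_apply, Pi.sub_apply, smul_eq_mul]
    ring
  rw [hslice]
  exact Submodule.sub_mem _ (Submodule.sub_mem _ (hf.comp_sub_right y)
    (Submodule.smul_mem _ _ hf)) hdefect

end

theorem stmt_14_general {G : Type*} [AddCommGroup G]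
    (f g h : G → ℂ)
    (hbound : ∃ C : ℝ, ∀ x y : G,
      ‖f (x - y) - f x * g y - g x * f y - h x * h y‖ ≤ C)
    (hh : ¬ Bdd h) :
    ¬ Bdd f := fun hf =>
  hh (bdd_of_forall_smul_add_smul_mem hf (smul_add_smul_mem_boundedFunctions hbound hf))

theorem stmt_14 {G : Type*} [AddCommGroup G]
    (f g h : G → ℂ)
    (hbound : ∃ C : ℝ, ∀ x y : G,
      ‖f (x - y) - f x * g y - g x * f y - h x * h y‖ ≤ C)
    (hh : ¬ Bdd h)
    (hdep : ∃ l μ : ℂ, (l, μ) ≠ (0, 0) ∧ Bdd (fun x => l * f x + μ * h x)) :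
    ¬ Bdd f :=
  stmt_14_general f g h hbound hh
end

section
/- Let G be an abelian group and let f, g, h : G → ℂ be functions such that the function (x,y) ↦ f(x−y) − f(x)g(y) − g(x)f(y) − h(x)h(y) is bounded on G×G and the odd part f^o of f is bounded. Suppose there exist constants γ, η ∈ ℂ such that h^e = γ·f^e and g^o = −γ·h^o − η·f^o. Define G₀ = g^e + (γ²/2)f^e and H₀ = h^o − γ·f^o. Then the function (x,y) ↦ f^e(x−y) − f^e(x)G₀(y) − G₀(x)f^e(y) − H₀(x)H₀(y) is bounded on G×G. -/
theorem stmt_19 {G : Type*} [AddCommGroup G]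
    (f g h : G → ℂ) (γ η : ℂ)
    (hbound : ∃ C : ℝ, ∀ x y : G,
      ‖f (x - y) - f x * g y - g x * f y - h x * h y‖ ≤ C)
    (hfo : Bdd (fun x : G => (f x - f (-x)) / 2))
    (hhe : ∀ x : G, (h x + h (-x)) / 2 = γ * ((f x + f (-x)) / 2))
    (hgo : ∀ x : G, (g x - g (-x)) / 2
      = -γ * ((h x - h (-x)) / 2) - η * ((f x - f (-x)) / 2)) :
    ∃ C : ℝ, ∀ x y : G,
      ‖(f (x - y) + f (-(x - y))) / 2
        - (f x + f (-x)) / 2 * ((g y + g (-y)) / 2 + γ ^ 2 / 2 * ((f y + f (-y)) / 2))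
        - ((g x + g (-x)) / 2 + γ ^ 2 / 2 * ((f x + f (-x)) / 2)) * ((f y + f (-y)) / 2)
        - ((h x - h (-x)) / 2 - γ * ((f x - f (-x)) / 2))
          * ((h y - h (-y)) / 2 - γ * ((f y - f (-y)) / 2))‖ ≤ C := by
  obtain ⟨C, hC⟩ := hbound
  obtain ⟨D, hD⟩ := hfo
  simp only at hD
  refine ⟨C + ‖γ ^ 2 + 2 * η‖ * D * D, fun x y => ?_⟩
  have hx : h (-x) = γ * (f x + f (-x)) - h x := by linear_combination 2 * hhe x
  have hy : h (-y) = γ * (f y + f (-y)) - h y := by linear_combination 2 * hhe y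
  have gx : g (-x) = g x + γ * (h x - h (-x)) + η * (f x - f (-x)) := by
    linear_combination -2 * hgo x
  have gy : g (-y) = g y + γ * (h y - h (-y)) + η * (f y - f (-y)) := by
    linear_combination -2 * hgo y
  have hneg : f (-x - -y) = f (-(x - y)) := by
    congr 1; abel
  have key : (f (x - y) + f (-(x - y))) / 2
        - (f x + f (-x)) / 2 * ((g y + g (-y)) / 2 + γ ^ 2 / 2 * ((f y + f (-y)) / 2))
        - ((g x + g (-x)) / 2 + γ ^ 2 / 2 * ((f x + f (-x)) / 2)) * ((f y + f (-y)) / 2)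
        - ((h x - h (-x)) / 2 - γ * ((f x - f (-x)) / 2))
          * ((h y - h (-y)) / 2 - γ * ((f y - f (-y)) / 2))
      = ((f (x - y) - f x * g y - g x * f y - h x * h y)
          + (f (-x - -y) - f (-x) * g (-y) - g (-x) * f (-y) - h (-x) * h (-y))) / 2
        - (γ ^ 2 + 2 * η) * ((f x - f (-x)) / 2) * ((f y - f (-y)) / 2) := by
    rw [hneg, gx, gy, hx, hy]
    ring
  rw [key]
  have h1 : ‖((f (x - y) - f x * g y - g x * f y - h x * h y)
          + (f (-x - -y) - f (-x) * g (-y) - g (-x) * f (-y) - h (-x) * h (-y))) / 2‖ ≤ C := by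
    rw [norm_div]
    have := norm_add_le (f (x - y) - f x * g y - g x * f y - h x * h y)
      (f (-x - -y) - f (-x) * g (-y) - g (-x) * f (-y) - h (-x) * h (-y))
    have h2 := hC x y
    have h3 := hC (-x) (-y)
    simp only [Complex.norm_two]
    linarith
  have h2 : ‖(γ ^ 2 + 2 * η) * ((f x - f (-x)) / 2) * ((f y - f (-y)) / 2)‖
      ≤ ‖γ ^ 2 + 2 * η‖ * D * D := by
    rw [norm_mul, norm_mul]
    have d1 := hD x
    have d2 := hD y
    have hDnn : (0:ℝ) ≤ D := le_trans (norm_nonneg _) d1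
    have step : ‖(f x - f (-x)) / 2‖ * ‖(f y - f (-y)) / 2‖ ≤ D * D :=
      mul_le_mul d1 d2 (norm_nonneg _) hDnn
    calc ‖γ ^ 2 + 2 * η‖ * ‖(f x - f (-x)) / 2‖
          * ‖(f y - f (-y)) / 2‖
        = ‖γ ^ 2 + 2 * η‖ * (‖(f x - f (-x)) / 2‖
          * ‖(f y - f (-y)) / 2‖) := by ring
      _ ≤ ‖γ ^ 2 + 2 * η‖ * (D * D) :=
          mul_le_mul_of_nonneg_left step (norm_nonneg _)
      _ = ‖γ ^ 2 + 2 * η‖ * D * D := by ring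
  calc ‖_‖ ≤ ‖((f (x - y) - f x * g y - g x * f y - h x * h y)
          + (f (-x - -y) - f (-x) * g (-y) - g (-x) * f (-y) - h (-x) * h (-y))) / 2‖
        + ‖(γ ^ 2 + 2 * η) * ((f x - f (-x)) / 2) * ((f y - f (-y)) / 2)‖ := by
        apply norm_sub_le
    _ ≤ _ := by linarith
end
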